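/- arXiv:2405.03385 — 2 statements merged into one kernel-verified Lean document; each statement's English description precedes it below -/
import Mathlib

section
/- Every maximizer of the orthogonality score over the unit sphere is a wall normal: if u ∈ ℝ³ satisfies ‖u‖ = 1 and J₃(v) ≤ J₃(u) for every v ∈ ℝ³ with ‖v‖ = 1, then u = eᵢ or u = −eᵢ for some i ∈ {1, 2, 3}. -/
open scoped RealInnerProductSpace

/-- The image-source grid `G`: points `(ε₁d₁ + 2q₁L₁, ε₂d₂ + 2q₂L₂, ε₃d₃ + 2q₃L₃)`
with `εᵢ ∈ {-1, 1}` and `qᵢ ∈ {0, …, Nᵢ/2 - 1}`. -/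
noncomputable def grid3 (L d : Fin 3 → ℝ) (N : Fin 3 → ℕ) : Set (EuclideanSpace ℝ (Fin 3)) :=
  {x | ∃ (ε : Fin 3 → ℝ) (q : Fin 3 → ℤ),
    (∀ i, ε i = 1 ∨ ε i = -1) ∧
    (∀ i, 0 ≤ q i ∧ q i < (N i / 2 : ℕ)) ∧
    (∀ i, x i = ε i * d i + 2 * (q i : ℝ) * L i)}

/-- The orthogonality score `J₃(u)`: the number of ordered pairs `(s, p) ∈ G × G`
with `⟨u, s - p⟩ = 0`. -/
noncomputable def J3 (L d : Fin 3 → ℝ) (N : Fin 3 → ℕ) (u : EuclideanSpace ℝ (Fin 3)) : ℕ :=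
  {sp : EuclideanSpace ℝ (Fin 3) × EuclideanSpace ℝ (Fin 3) |
    sp.1 ∈ grid3 L d N ∧ sp.2 ∈ grid3 L d N ∧ ⟪u, sp.1 - sp.2⟫ = 0}.ncard

/-!
The grid is a box `S₁ × S₂ × S₃`. Suppose `u` has two nonzero coordinates `uᵢ, uⱼ`. Replacing the
`i`-th coordinate of `s` by that of `p` sends a pair `(s, p)` counted by `J₃(u)` to a pair counted
by `J₃(eᵢ)`, and this map is injective because `⟨u, s - p⟩ = 0` determines `sᵢ` from the other
coordinates when `uᵢ ≠ 0`. It misses a pair `(a, b)` in which `b` has the largest possible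
`i`-th coordinate and `a` differs from `b` only in coordinate `j`, with `uᵢ uⱼ (aⱼ - bⱼ) < 0`:
a preimage `(s, b)` would need `uᵢ (sᵢ - bᵢ) = -uⱼ (aⱼ - bⱼ)`, hence `sᵢ > bᵢ`. So `J₃(u) < J₃(eᵢ)`,
and a maximizer has a single nonzero coordinate.
-/

section

variable {ι : Type*}

def box (S : ι → Set ℝ) : Set (EuclideanSpace ℝ ι) :=
  {x | ∀ k, x k ∈ S k}

def orthoPairs [Fintype ι] (G : Set (EuclideanSpace ℝ ι)) (u : EuclideanSpace ℝ ι) :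
    Set (EuclideanSpace ℝ ι × EuclideanSpace ℝ ι) :=
  {sp | sp.1 ∈ G ∧ sp.2 ∈ G ∧ ⟪u, sp.1 - sp.2⟫ = 0}

noncomputable def updateCoord [DecidableEq ι] (x : EuclideanSpace ℝ ι) (i : ι) (v : ℝ) :
    EuclideanSpace ℝ ι :=
  WithLp.toLp 2 (Function.update x.ofLp i v)

noncomputable def copyCoord [DecidableEq ι] (i : ι)
    (sp : EuclideanSpace ℝ ι × EuclideanSpace ℝ ι) : EuclideanSpace ℝ ι × EuclideanSpace ℝ ι :=
  (updateCoord sp.1 i (sp.2 i), sp.2)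

@[simp]
lemma updateCoord_apply_self [DecidableEq ι] (x : EuclideanSpace ℝ ι) (i : ι) (v : ℝ) :
    updateCoord x i v i = v := by
  simp [updateCoord]

@[simp]
lemma updateCoord_apply_of_ne [DecidableEq ι] (x : EuclideanSpace ℝ ι) {i k : ι} (v : ℝ)
    (h : k ≠ i) : updateCoord x i v k = x k := by
  simp [updateCoord, h]

lemma sub_updateCoord [DecidableEq ι] (x : EuclideanSpace ℝ ι) (i : ι) (v : ℝ) :
    x - updateCoord x i v = (x i - v) • EuclideanSpace.single i 1 := by
  ext k
  by_cases h : k = i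
  · subst h; simp
  · simp [h]

lemma updateCoord_sub_updateCoord [DecidableEq ι] (x : EuclideanSpace ℝ ι) (i : ι) (v w : ℝ) :
    updateCoord x i v - updateCoord x i w = (v - w) • EuclideanSpace.single i 1 := by
  ext k
  by_cases h : k = i
  · subst h; simp
  · simp [h]

lemma updateCoord_mem_box [DecidableEq ι] {S : ι → Set ℝ} {x : EuclideanSpace ℝ ι} {i : ι}
    {v : ℝ} (hx : x ∈ box S) (hv : v ∈ S i) : updateCoord x i v ∈ box S := by
  intro k
  by_cases h : k = i
  · subst h; simpa using hv
  · simpa [h] using hx k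

lemma box_finite [Finite ι] {S : ι → Set ℝ} (hS : ∀ k, (S k).Finite) : (box S).Finite :=
  ((Set.Finite.pi hS).preimage (WithLp.ofLp_injective 2).injOn).subset fun _ hx k _ => hx k

lemma box_nonempty {S : ι → Set ℝ} (hS : ∀ k, (S k).Nonempty) : (box S).Nonempty :=
  ⟨WithLp.toLp 2 fun k => (hS k).some, fun k => (hS k).some_mem⟩

lemma orthoPairs_finite [Fintype ι] {G : Set (EuclideanSpace ℝ ι)} (hG : G.Finite)
    (u : EuclideanSpace ℝ ι) : (orthoPairs G u).Finite :=
  (hG.prod hG).subset fun _ h => ⟨h.1, h.2.1⟩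

lemma inner_smul_single_right [Fintype ι] [DecidableEq ι] (u : EuclideanSpace ℝ ι) (i : ι)
    (c : ℝ) : ⟪u, c • EuclideanSpace.single i (1 : ℝ)⟫ = c * u i := by
  simp [inner_smul_right, EuclideanSpace.inner_single_right]

lemma exists_pair_sub_eq_smul_single [DecidableEq ι] {S : ι → Set ℝ} {i j : ι}
    (hfin : (S i).Finite) (hne : ∀ k, (S k).Nonempty) (hj : (S j).Nontrivial) (hij : i ≠ j)
    {r : ℝ} (hr : r ≠ 0) :
    ∃ a ∈ box S, ∃ b ∈ box S, (∀ x ∈ box S, x i ≤ b i) ∧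
      ∃ c, a - b = c • EuclideanSpace.single j 1 ∧ r * c < 0 := by
  obtain ⟨m, hm, hmax⟩ := Set.exists_max_image (S i) id hfin (hne i)
  obtain ⟨x, hx⟩ := box_nonempty hne
  obtain ⟨y, hy, y', hy', hlt⟩ : ∃ y ∈ S j, ∃ y' ∈ S j, r * (y - y') < 0 := by
    obtain ⟨y, hy, y', hy', hyy'⟩ := hj
    rcases (mul_ne_zero hr (sub_ne_zero.2 hyy')).lt_or_gt with h | h
    · exact ⟨y, hy, y', hy', h⟩
    · exact ⟨y', hy', y, hy, by linarith [mul_neg r (y - y'), neg_sub y y']⟩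
  set base := updateCoord x i m
  have hbase : base ∈ box S := updateCoord_mem_box hx hm
  refine ⟨updateCoord base j y, updateCoord_mem_box hbase hy, updateCoord base j y',
    updateCoord_mem_box hbase hy', fun z hz => ?_, y - y', updateCoord_sub_updateCoord _ _ _ _, hlt⟩
  rw [updateCoord_apply_of_ne _ _ hij, updateCoord_apply_self]
  exact hmax _ (hz i)

section CopyCoord

variable [Fintype ι] [DecidableEq ι] {u : EuclideanSpace ℝ ι} {i : ι}

lemma mapsTo_copyCoord (S : ι → Set ℝ) :
    Set.MapsTo (copyCoord i) (orthoPairs (box S) u)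
      (orthoPairs (box S) (EuclideanSpace.single i 1)) := by
  rintro ⟨s, p⟩ ⟨hs, hp, -⟩
  refine ⟨updateCoord_mem_box hs (hp i), hp, ?_⟩
  simp [copyCoord, EuclideanSpace.inner_single_left]

lemma injOn_copyCoord (G : Set (EuclideanSpace ℝ ι)) (hui : u i ≠ 0) :
    Set.InjOn (copyCoord i) (orthoPairs G u) := by
  rintro ⟨s, p⟩ ⟨-, -, hs⟩ ⟨t, q⟩ ⟨-, -, ht⟩ h
  simp only [copyCoord, Prod.mk.injEq] at h
  obtain ⟨hupd, rfl⟩ := h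
  have hst : s - t = (s i - t i) • EuclideanSpace.single i 1 := by
    calc s - t = (s - updateCoord s i (p i)) - (t - updateCoord t i (p i)) := by
          rw [hupd]; abel
      _ = (s i - t i) • EuclideanSpace.single i 1 := by
          rw [sub_updateCoord, sub_updateCoord, ← sub_smul, sub_sub_sub_cancel_right]
  have hinner : (s i - t i) * u i = 0 := by
    rw [← inner_smul_single_right, ← hst, ← sub_sub_sub_cancel_right s t p, inner_sub_right, hs,
      ht, sub_zero]
  have hsi : s i = t i := sub_eq_zero.1 ((mul_eq_zero.1 hinner).resolve_right hui)
  rw [Prod.mk.injEq, ← sub_eq_zero, hst, hsi, sub_self, zero_smul]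
  exact ⟨rfl, rfl⟩

lemma notMem_image_copyCoord {S : ι → Set ℝ} {a b : EuclideanSpace ℝ ι} {j : ι} {c : ℝ}
    (hb : ∀ x ∈ box S, x i ≤ b i) (hab : a - b = c • EuclideanSpace.single j 1)
    (hneg : u i * u j * c < 0) : (a, b) ∉ copyCoord i '' orthoPairs (box S) u := by
  rintro ⟨⟨s, p⟩, ⟨hs, -, hsp⟩, h⟩
  simp only [copyCoord, Prod.mk.injEq] at h
  obtain ⟨rfl, rfl⟩ := h
  have hdecomp : s - p =
      (s i - p i) • EuclideanSpace.single i 1 + c • EuclideanSpace.single j 1 := by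
    rw [← sub_updateCoord, ← hab]; abel
  have hlin : (s i - p i) * u i + c * u j = 0 := by
    rwa [hdecomp, inner_add_right, inner_smul_single_right, inner_smul_single_right] at hsp
  have hle : s i ≤ p i := hb s hs
  have hprod : u i * u j * c = (p i - s i) * (u i * u i) := by linear_combination u i * hlin
  exact hneg.not_ge (hprod ▸ mul_nonneg (sub_nonneg.2 hle) (mul_self_nonneg (u i)))

theorem ncard_orthoPairs_lt_single {S : ι → Set ℝ} (hfin : ∀ k, (S k).Finite)
    (hne : ∀ k, (S k).Nonempty) {j : ι} (hj : (S j).Nontrivial) (hij : i ≠ j) (hui : u i ≠ 0)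
    (huj : u j ≠ 0) :
    (orthoPairs (box S) u).ncard < (orthoPairs (box S) (EuclideanSpace.single i 1)).ncard := by
  obtain ⟨a, ha, b, hb, hmax, c, hab, hneg⟩ :=
    exists_pair_sub_eq_smul_single (hfin i) hne hj hij (mul_ne_zero hui huj)
  have hmem : (a, b) ∈ orthoPairs (box S) (EuclideanSpace.single i 1) := by
    refine ⟨ha, hb, ?_⟩
    rw [hab, inner_smul_single_right]
    simp [hij.symm]
  calc (orthoPairs (box S) u).ncard = (copyCoord i '' orthoPairs (box S) u).ncard :=
        (injOn_copyCoord _ hui).ncard_image.symm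
    _ < (orthoPairs (box S) (EuclideanSpace.single i 1)).ncard :=
        Set.ncard_lt_ncard ((Set.ssubset_iff_of_subset (mapsTo_copyCoord S).image_subset).2
          ⟨_, hmem, notMem_image_copyCoord hmax hab hneg⟩) (orthoPairs_finite (box_finite hfin) _)

end CopyCoord

lemma eq_single_or_eq_neg_single [Fintype ι] [DecidableEq ι] {u : EuclideanSpace ℝ ι} {i : ι}
    (hu : ‖u‖ = 1) (hzero : ∀ j ≠ i, u j = 0) :
    u = EuclideanSpace.single i 1 ∨ u = -EuclideanSpace.single i 1 := by
  have hsingle : u = EuclideanSpace.single i (u i) := by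
    ext k
    by_cases h : k = i
    · subst h; simp
    · simp [h, hzero k h]
  rw [hsingle, PiLp.norm_single, Real.norm_eq_abs] at hu
  rcases abs_eq zero_le_one |>.1 hu with h | h
  · exact .inl (by rw [hsingle, h])
  · exact .inr (by rw [hsingle, h, ← PiLp.single_neg])

end

def gridCoords (l d : ℝ) (n : ℕ) : Set ℝ :=
  {t | ∃ (ε : ℝ) (q : ℤ), (ε = 1 ∨ ε = -1) ∧ (0 ≤ q ∧ q < (n / 2 : ℕ)) ∧
    t = ε * d + 2 * (q : ℝ) * l}

lemma grid3_eq_box (L d : Fin 3 → ℝ) (N : Fin 3 → ℕ) :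
    grid3 L d N = box fun k => gridCoords (L k) (d k) (N k) := by
  ext x
  constructor
  · rintro ⟨ε, q, hε, hq, hx⟩ k
    exact ⟨ε k, q k, hε k, hq k, hx k⟩
  · intro hx
    choose ε q hε hq hx using hx
    exact ⟨ε, q, hε, hq, hx⟩

lemma gridCoords_finite (l d : ℝ) (n : ℕ) : (gridCoords l d n).Finite := by
  refine ((Set.toFinite ({1, -1} : Set ℝ)).prod (Set.finite_Ico (0 : ℤ) (n / 2 : ℕ))).image
    (fun p => p.1 * d + 2 * (p.2 : ℝ) * l) |>.subset ?_
  rintro t ⟨ε, q, hε, hq, rfl⟩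
  exact ⟨(ε, q), ⟨hε, hq⟩, rfl⟩

lemma gridCoords_nontrivial (l : ℝ) {d : ℝ} (hd : d ≠ 0) {n : ℕ} (hn : 2 ≤ n) :
    (gridCoords l d n).Nontrivial := by
  have hq : (0 : ℤ) < (n / 2 : ℕ) := by omega
  refine ⟨d, ⟨1, 0, .inl rfl, ⟨le_rfl, hq⟩, by simp⟩,
    -d, ⟨-1, 0, .inr rfl, ⟨le_rfl, hq⟩, by simp⟩, fun h => hd (by linarith)⟩

theorem maximizer_is_wall_normal_general (L d : Fin 3 → ℝ) (N : Fin 3 → ℕ)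
    (hd : ∀ i, 0 < d i ∧ d i < L i)
    (hN : ∀ i, 0 < N i ∧ Even (N i))
    (u : EuclideanSpace ℝ (Fin 3)) (hu : ‖u‖ = 1)
    (hmax : ∀ v : EuclideanSpace ℝ (Fin 3), ‖v‖ = 1 → J3 L d N v ≤ J3 L d N u) :
    ∃ i : Fin 3, u = EuclideanSpace.single i 1 ∨ u = -EuclideanSpace.single i 1 := by
  have hJ : ∀ v, J3 L d N v = (orthoPairs (box fun k => gridCoords (L k) (d k) (N k)) v).ncard :=
    fun v => by rw [← grid3_eq_box]; rfl
  have hnontriv : ∀ k, (gridCoords (L k) (d k) (N k)).Nontrivial := fun k =>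
    gridCoords_nontrivial _ (hd k).1.ne' (by obtain ⟨hpos, m, hm⟩ := hN k; omega)
  obtain ⟨i, hi⟩ : ∃ i, u i ≠ 0 := by
    by_contra! h
    exact one_ne_zero (hu ▸ norm_eq_zero.2 (by ext k; exact h k))
  refine ⟨i, eq_single_or_eq_neg_single hu fun j hji => ?_⟩
  by_contra huj
  have hlt := ncard_orthoPairs_lt_single (fun k => gridCoords_finite _ _ _)
    (fun k => (hnontriv k).nonempty) (hnontriv j) hji.symm hi huj
  rw [← hJ, ← hJ] at hlt
  exact (hmax _ (by simp)).not_gt hlt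

/-- Every maximizer of the orthogonality score over the unit sphere is a wall normal. -/
theorem maximizer_is_wall_normal (L d : Fin 3 → ℝ) (N : Fin 3 → ℕ)
    (hL : ∀ i, 0 < L i) (hd : ∀ i, 0 < d i ∧ d i < L i)
    (hN : ∀ i, 0 < N i ∧ Even (N i))
    (u : EuclideanSpace ℝ (Fin 3)) (hu : ‖u‖ = 1)
    (hmax : ∀ v : EuclideanSpace ℝ (Fin 3), ‖v‖ = 1 → J3 L d N v ≤ J3 L d N u) :
    ∃ i : Fin 3, u = EuclideanSpace.single i 1 ∨ u = -EuclideanSpace.single i 1 :=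
  maximizer_is_wall_normal_general L d N hd hN u hu hmax
end

section
/- Quantitative form of the orientation proposition (Eq. (22) of the paper): for every u ∈ ℝ³ with ‖u‖ = 1 and u ∉ {±e₁, ±e₂, ±e₃}, one has J₃(u) < N₁N₂N₃·max(N₁N₂, N₂N₃, N₁N₃) = max(J₃(e₁), J₃(e₂), J₃(e₃)). -/
open scoped RealInnerProductSpace

/-!
The grid is a product `X₀ × X₁ × X₂` of one-dimensional image-source sets with `#Xᵢ = Nᵢ`, and
`J₃(u) = ∑_c n_c²`, where `n_c` counts the grid points with `⟪u, x⟫ = c`. For `u = eᵢ` every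
nonempty level set is a copy of `∏_{l ≠ i} X_l`, so `J₃(eᵢ) = N₀N₁N₂ · ∏_{l ≠ i} N_l`. Otherwise the
unit vector `u` has two nonzero coordinates `i ≠ j`. A level set is then determined by the
coordinates off `i`, so `n_c ≤ ∏_{l ≠ i} N_l`; the level set of the largest value of `⟪u, ·⟫` even
fixes the `i`- and `j`-coordinates, so it is smaller by the factor `N_j ≥ 2`. Hence
`∑ n_c² < ∏_{l ≠ i} N_l · ∑ n_c = ∏_{l ≠ i} N_l · N₀N₁N₂`.
-/

open Finset

section PairCount

variable {α β : Type*} [DecidableEq β]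

theorem card_filter_prod_eq_sum_sq {s : Finset α} {t : Finset β} {g : α → β}
    (h : Set.MapsTo g s t) :
    #{p ∈ s ×ˢ s | g p.1 = g p.2} = ∑ c ∈ t, #{a ∈ s | g a = c} ^ 2 := by
  rw [card_eq_sum_card_fiberwise (f := fun p : α × α => g p.1) (t := t)
    fun p hp => h (mem_product.1 (mem_filter.1 hp).1).1]
  refine sum_congr rfl fun c _ => ?_
  rw [filter_filter, sq, ← card_product, ← filter_product]
  congr 1
  exact filter_congr fun p _ =>
    ⟨fun ⟨h₁, h₂⟩ => ⟨h₂, h₁ ▸ h₂⟩, fun ⟨h₁, h₂⟩ => ⟨h₁.trans h₂.symm, h₁⟩⟩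

theorem card_filter_prod_eq_lt_mul_card {s : Finset α} {g : α → β} {B : ℕ}
    (hle : ∀ c, #{a ∈ s | g a = c} ≤ B) {a₀ : α} (ha₀ : a₀ ∈ s)
    (hlt : #{a ∈ s | g a = g a₀} < B) :
    #{p ∈ s ×ˢ s | g p.1 = g p.2} < B * #s := by
  rw [card_filter_prod_eq_sum_sq (t := s.image g) fun a ha => mem_image_of_mem g ha,
    card_eq_sum_card_image g s, mul_sum]
  refine sum_lt_sum (fun c _ => by rw [sq]; exact Nat.mul_le_mul_right _ (hle c))
    ⟨g a₀, mem_image_of_mem g ha₀, ?_⟩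
  have hpos : 0 < #{a ∈ s | g a = g a₀} := card_pos.2 ⟨a₀, mem_filter.2 ⟨ha₀, rfl⟩⟩
  rw [sq]
  exact Nat.mul_lt_mul_of_pos_right hlt hpos

end PairCount

section CoordBox

variable {ι : Type*} [Fintype ι] [DecidableEq ι]

noncomputable def coordBox (X : ι → Finset ℝ) : Finset (EuclideanSpace ℝ ι) :=
  (Fintype.piFinset X).map (WithLp.equiv 2 (ι → ℝ)).symm.toEmbedding

variable {X : ι → Finset ℝ}

theorem mem_coordBox {x : EuclideanSpace ℝ ι} : x ∈ coordBox X ↔ ∀ i, x i ∈ X i := by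
  simp [coordBox, Finset.mem_map_equiv]

theorem card_coordBox : #(coordBox X) = ∏ i, #(X i) := by
  rw [coordBox, card_map, Fintype.card_piFinset]

theorem card_le_prod_compl_of_eqOn_compl_imp_eq {s : Finset (EuclideanSpace ℝ ι)} (T : Finset ι)
    (hs : s ⊆ coordBox X) (hinj : ∀ x ∈ s, ∀ y ∈ s, (∀ l ∉ T, x l = y l) → x = y) :
    #s ≤ ∏ l ∈ Tᶜ, #(X l) := by
  rw [← prod_coe_sort, ← Fintype.card_piFinset]
  refine card_le_card_of_injOn (fun x (l : ↥Tᶜ) => x l) (fun x hx => ?_) fun x hx y hy hxy => ?_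
  · simpa using fun l _ => mem_coordBox.1 (hs hx) l
  · exact hinj x hx y hy fun l hl => congrFun hxy ⟨l, mem_compl.2 hl⟩

theorem card_filter_coord_eq (i : ι) {c : ℝ} (hc : c ∈ X i) :
    #{x ∈ coordBox X | x i = c} = ∏ l ∈ {i}ᶜ, #(X l) := by
  have : ({x ∈ coordBox X | x i = c} : Finset _) = coordBox (Function.update X i {c}) := by
    ext x
    simp only [mem_filter, mem_coordBox]
    constructor
    · rintro ⟨hx, rfl⟩ l
      rcases eq_or_ne l i with rfl | hl
      · simp
      · simpa [hl] using hx l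
    · intro h
      have hi : x i = c := by simpa using h i
      refine ⟨fun l => ?_, hi⟩
      rcases eq_or_ne l i with rfl | hl
      · exact hi ▸ hc
      · simpa [hl] using h l
  rw [this, card_coordBox, ← prod_compl_mul_prod {i}, prod_singleton, Function.update_self,
    card_singleton, mul_one]
  exact prod_congr rfl fun l hl => by rw [Function.update_of_ne (by simpa using hl)]

theorem card_filter_prod_coord_eq (i : ι) :
    #{p ∈ coordBox X ×ˢ coordBox X | p.1 i = p.2 i} =
      (∏ l ∈ {i}ᶜ, #(X l)) * #(coordBox X) := by
  rw [card_filter_prod_eq_sum_sq (g := fun x : EuclideanSpace ℝ ι => x i) (t := X i)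
      fun x hx => mem_coordBox.1 hx i,
    sum_congr rfl fun c hc => by rw [card_filter_coord_eq i hc], sum_const, smul_eq_mul,
    card_coordBox, ← prod_compl_mul_prod {i}, prod_singleton]
  ring

theorem card_filter_inner_eq_le {u : EuclideanSpace ℝ ι} {i : ι} (hu : u i ≠ 0) (c : ℝ) :
    #{x ∈ coordBox X | ⟪u, x⟫ = c} ≤ ∏ l ∈ {i}ᶜ, #(X l) := by
  refine card_le_prod_compl_of_eqOn_compl_imp_eq {i} (filter_subset _ _)
    fun x hx y hy hxy => ?_
  have hsub : x - y = EuclideanSpace.single i (x i - y i) := by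
    ext l
    rcases eq_or_ne l i with rfl | hl
    · simp
    · simp [hl, hxy l (by simpa using hl)]
  have hinner : ⟪u, x - y⟫ = 0 := by
    rw [inner_sub_right, (mem_filter.1 hx).2, (mem_filter.1 hy).2, sub_self]
  rw [hsub, EuclideanSpace.inner_single_right] at hinner
  have hi : x i - y i = 0 := by simpa [hu] using hinner
  rw [← sub_eq_zero, hsub, hi]
  simp

theorem exists_card_filter_inner_eq_le (hX : ∀ l, (X l).Nonempty) (u : EuclideanSpace ℝ ι)
    {T : Finset ι} (hT : ∀ l ∈ T, u l ≠ 0) :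
    ∃ a ∈ coordBox X, #{x ∈ coordBox X | ⟪u, x⟫ = ⟪u, a⟫} ≤ ∏ l ∈ Tᶜ, #(X l) := by
  choose a ha hmax using fun l => (X l).exists_max_image (fun z => z * u l) (hX l)
  have haX : WithLp.toLp 2 a ∈ coordBox X := mem_coordBox.2 ha
  refine ⟨_, haX, card_le_prod_compl_of_eqOn_compl_imp_eq T (filter_subset _ _) ?_⟩
  -- `a` maximises every summand `z * u l` of `⟪u, z⟫`, so on its level set all summands agree
  have hfiber : ∀ x ∈ {x ∈ coordBox X | ⟪u, x⟫ = ⟪u, WithLp.toLp 2 a⟫}, ∀ l ∈ T, x l = a l := by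
    intro x hx l hl
    obtain ⟨hxX, hx⟩ := mem_filter.1 hx
    simp only [PiLp.inner_apply, RCLike.inner_apply, conj_trivial] at hx
    have := (sum_eq_sum_iff_of_le fun l _ => hmax l _ (mem_coordBox.1 hxX l)).1 hx l (mem_univ l)
    exact mul_right_cancel₀ (hT l hl) this
  intro x hx y hy hxy
  ext l
  by_cases hl : l ∈ T
  · rw [hfiber x hx l hl, hfiber y hy l hl]
  · exact hxy l hl

theorem card_filter_prod_inner_eq_lt (hX : ∀ l, (X l).Nonempty) {i j : ι} (hij : i ≠ j)
    (hj : 1 < #(X j)) {u : EuclideanSpace ℝ ι} (hui : u i ≠ 0) (huj : u j ≠ 0) :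
    #{p ∈ coordBox X ×ˢ coordBox X | ⟪u, p.1⟫ = ⟪u, p.2⟫} <
      (∏ l ∈ {i}ᶜ, #(X l)) * #(coordBox X) := by
  obtain ⟨a, ha, hmax⟩ := exists_card_filter_inner_eq_le hX u (T := {j, i}) (by simp [hui, huj])
  refine card_filter_prod_eq_lt_mul_card (card_filter_inner_eq_le hui) ha ?_
  have hpos : 0 < #{x ∈ coordBox X | ⟪u, x⟫ = ⟪u, a⟫} := card_pos.2 ⟨a, mem_filter.2 ⟨ha, rfl⟩⟩
  calc _ ≤ ∏ l ∈ {j, i}ᶜ, #(X l) := hmax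
    _ < #(X j) * ∏ l ∈ {j, i}ᶜ, #(X l) := lt_mul_left (hpos.trans_le hmax) hj
    _ = ∏ l ∈ {i}ᶜ, #(X l) := by
      rw [compl_insert, mul_prod_erase _ (fun l => #(X l)) (by simpa using hij.symm)]

end CoordBox

theorem EuclideanSpace.exists_ne_apply_ne_zero_of_norm_eq_one {ι : Type*} [Fintype ι]
    [DecidableEq ι] {u : EuclideanSpace ℝ ι} (hu : ‖u‖ = 1)
    (hnot : ∀ i, u ≠ EuclideanSpace.single i 1 ∧ u ≠ -EuclideanSpace.single i 1) :
    ∃ i j, i ≠ j ∧ u i ≠ 0 ∧ u j ≠ 0 := by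
  obtain ⟨i, hi⟩ : ∃ i, u i ≠ 0 := by
    by_contra! h
    have : u = 0 := by ext l; exact h l
    simp [this] at hu
  by_contra! h
  have hu_single : u = EuclideanSpace.single i (u i) := by
    ext l
    rcases eq_or_ne l i with rfl | hl
    · simp
    · simp [hl, h i l (Ne.symm hl) hi]
  rw [hu_single, PiLp.norm_single, Real.norm_eq_abs] at hu
  rcases abs_eq (zero_le_one' ℝ) |>.1 hu with h1 | h1
  · exact (hnot i).1 (by rw [hu_single, h1])
  · exact (hnot i).2 (by rw [hu_single, h1]; exact PiLp.single_neg 2 i)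

noncomputable def imageSources (L d : ℝ) (n : ℕ) : Finset ℝ :=
  (({1, -1} : Finset ℝ) ×ˢ Ico (0 : ℤ) n).image fun p => p.1 * d + 2 * (p.2 : ℝ) * L

theorem mem_imageSources {L d x : ℝ} {n : ℕ} :
    x ∈ imageSources L d n ↔
      ∃ (ε : ℝ) (q : ℤ), (ε = 1 ∨ ε = -1) ∧ (0 ≤ q ∧ q < n) ∧ x = ε * d + 2 * (q : ℝ) * L := by
  simp only [imageSources, mem_image, mem_product, mem_insert, mem_singleton, mem_Ico,
    Prod.exists, and_assoc, eq_comm (a := x)]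

theorem ne_intCast_mul_of_pos_of_lt {d L : ℝ} (hd : 0 < d) (hdL : d < L) (k : ℤ) :
    d ≠ k * L := by
  rintro rfl
  rcases le_or_gt k 0 with hk | hk
  · have : (k : ℝ) ≤ 0 := by exact_mod_cast hk
    nlinarith
  · have : (1 : ℝ) ≤ k := by exact_mod_cast hk
    nlinarith

theorem card_imageSources {L d : ℝ} (hd : 0 < d) (hdL : d < L) (n : ℕ) :
    #(imageSources L d n) = 2 * n := by
  rw [imageSources, card_image_of_injOn, card_product, Int.card_Ico]
  · simp [card_pair (show (1 : ℝ) ≠ -1 by norm_num)]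
  rintro ⟨ε, q⟩ hp ⟨ε', q'⟩ hp' heq
  simp only [coe_product, Set.mem_prod, mem_coe, mem_insert, mem_singleton] at hp hp' heq
  have hL : L ≠ 0 := (hd.trans hdL).ne'
  rcases hp.1 with rfl | rfl <;> rcases hp'.1 with rfl | rfl
  · have : (q : ℝ) = q' := mul_right_cancel₀ hL (by linarith)
    exact Prod.ext rfl (by exact_mod_cast this)
  · exact absurd (by push_cast; linarith) (ne_intCast_mul_of_pos_of_lt hd hdL (q' - q))
  · exact absurd (by push_cast; linarith) (ne_intCast_mul_of_pos_of_lt hd hdL (q - q'))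
  · have : (q : ℝ) = q' := mul_right_cancel₀ hL (by linarith)
    exact Prod.ext rfl (by exact_mod_cast this)

section ImageSourceGrid

variable {L d : Fin 3 → ℝ} {N : Fin 3 → ℕ}

theorem grid3_eq_coordBox :
    grid3 L d N = (coordBox fun i => imageSources (L i) (d i) (N i / 2) : Set _) := by
  ext x
  simp only [grid3, Set.mem_ofPred_eq, mem_coe, mem_coordBox, mem_imageSources]
  constructor
  · rintro ⟨ε, q, hε, hq, hx⟩ i
    exact ⟨ε i, q i, hε i, hq i, hx i⟩
  · intro h
    choose ε q hε hq hx using h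
    exact ⟨ε, q, hε, hq, hx⟩

theorem J3_eq_card_filter (u : EuclideanSpace ℝ (Fin 3)) :
    J3 L d N u = #{p ∈ (coordBox fun i => imageSources (L i) (d i) (N i / 2)) ×ˢ
      (coordBox fun i => imageSources (L i) (d i) (N i / 2)) | ⟪u, p.1⟫ = ⟪u, p.2⟫} := by
  rw [J3, grid3_eq_coordBox, ← Set.ncard_coe_finset]
  congr 1
  ext p
  simp [inner_sub_right, sub_eq_zero, and_assoc]

theorem card_imageSources_half (hd : ∀ i, 0 < d i ∧ d i < L i) (hN : ∀ i, Even (N i))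
    (i : Fin 3) : #(imageSources (L i) (d i) (N i / 2)) = N i := by
  rw [card_imageSources (hd i).1 (hd i).2, Nat.two_mul_div_two_of_even (hN i)]

theorem card_coordBox_imageSources (hd : ∀ i, 0 < d i ∧ d i < L i) (hN : ∀ i, Even (N i)) :
    #(coordBox fun i => imageSources (L i) (d i) (N i / 2)) = N 0 * N 1 * N 2 := by
  rw [card_coordBox, Fin.prod_univ_three, card_imageSources_half hd hN,
    card_imageSources_half hd hN, card_imageSources_half hd hN]

theorem J3_single (hd : ∀ i, 0 < d i ∧ d i < L i) (hN : ∀ i, Even (N i)) (i : Fin 3) :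
    J3 L d N (EuclideanSpace.single i 1) = (∏ l ∈ {i}ᶜ, N l) * (N 0 * N 1 * N 2) := by
  simp only [J3_eq_card_filter, EuclideanSpace.inner_single_left, map_one, one_mul,
    card_filter_prod_coord_eq, card_imageSources_half hd hN, card_coordBox_imageSources hd hN]

theorem J3_lt_of_apply_ne_zero (hd : ∀ i, 0 < d i ∧ d i < L i)
    (hN : ∀ i, 0 < N i ∧ Even (N i)) {u : EuclideanSpace ℝ (Fin 3)} {i j : Fin 3}
    (hij : i ≠ j) (hui : u i ≠ 0) (huj : u j ≠ 0) :
    J3 L d N u < (∏ l ∈ {i}ᶜ, N l) * (N 0 * N 1 * N 2) := by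
  have hX := card_imageSources_half hd fun l => (hN l).2
  have hlt := card_filter_prod_inner_eq_lt (fun l => card_pos.1 ((hX l).symm ▸ (hN l).1)) hij
    (by obtain ⟨hpos, k, hk⟩ := hN j; rw [hX j]; omega) hui huj
  rw [J3_eq_card_filter]
  rwa [card_coordBox_imageSources hd fun l => (hN l).2, prod_congr rfl fun l _ => hX l] at hlt

end ImageSourceGrid

theorem Fin.prod_compl_singleton_three (f : Fin 3 → ℕ) :
    ∏ l ∈ ({0}ᶜ : Finset (Fin 3)), f l = f 1 * f 2 ∧
    ∏ l ∈ ({1}ᶜ : Finset (Fin 3)), f l = f 0 * f 2 ∧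
    ∏ l ∈ ({2}ᶜ : Finset (Fin 3)), f l = f 0 * f 1 := by
  refine ⟨?_, ?_, ?_⟩
  · rw [show ({0}ᶜ : Finset (Fin 3)) = {1, 2} by decide, prod_pair (by decide)]
  · rw [show ({1}ᶜ : Finset (Fin 3)) = {0, 2} by decide, prod_pair (by decide)]
  · rw [show ({2}ᶜ : Finset (Fin 3)) = {0, 1} by decide, prod_pair (by decide)]

theorem J3_lt_max_of_not_axis_general (L d : Fin 3 → ℝ) (N : Fin 3 → ℕ)
    (hd : ∀ i, 0 < d i ∧ d i < L i)
    (hN : ∀ i, 0 < N i ∧ Even (N i))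
    (u : EuclideanSpace ℝ (Fin 3)) (hu : ‖u‖ = 1)
    (hnot : ∀ i : Fin 3, u ≠ EuclideanSpace.single i 1 ∧ u ≠ -EuclideanSpace.single i 1) :
    J3 L d N u < N 0 * N 1 * N 2 * max (N 0 * N 1) (max (N 1 * N 2) (N 0 * N 2)) ∧
    N 0 * N 1 * N 2 * max (N 0 * N 1) (max (N 1 * N 2) (N 0 * N 2)) =
      max (J3 L d N (EuclideanSpace.single 0 1))
        (max (J3 L d N (EuclideanSpace.single 1 1)) (J3 L d N (EuclideanSpace.single 2 1))) := by
  obtain ⟨h0, h1, h2⟩ := Fin.prod_compl_singleton_three N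
  constructor
  · obtain ⟨i, j, hij, hui, huj⟩ := EuclideanSpace.exists_ne_apply_ne_zero_of_norm_eq_one hu hnot
    refine (J3_lt_of_apply_ne_zero hd hN hij hui huj).trans_le ?_
    rw [mul_comm]
    gcongr
    fin_cases i <;>
      simp only [Fin.zero_eta, Fin.mk_one, Fin.reduceFinMk, h0, h1, h2, le_max_iff, le_refl,
        true_or, or_true]
  · simp only [J3_single hd (fun i => (hN i).2), h0, h1, h2, ← Nat.mul_max_mul_right,
      mul_comm (N 0 * N 1 * N 2)]
    ac_rfl

/-- Quantitative form of the orientation proposition: every unit vector that is not a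
signed standard basis vector has strictly smaller score than
`N₁N₂N₃ · max(N₁N₂, N₂N₃, N₁N₃)`, which equals `max(J₃(e₁), J₃(e₂), J₃(e₃))`. -/
theorem J3_lt_max_of_not_axis (L d : Fin 3 → ℝ) (N : Fin 3 → ℕ)
    (hL : ∀ i, 0 < L i) (hd : ∀ i, 0 < d i ∧ d i < L i)
    (hN : ∀ i, 0 < N i ∧ Even (N i))
    (u : EuclideanSpace ℝ (Fin 3)) (hu : ‖u‖ = 1)
    (hnot : ∀ i : Fin 3, u ≠ EuclideanSpace.single i 1 ∧ u ≠ -EuclideanSpace.single i 1) :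
    J3 L d N u < N 0 * N 1 * N 2 * max (N 0 * N 1) (max (N 1 * N 2) (N 0 * N 2)) ∧
    N 0 * N 1 * N 2 * max (N 0 * N 1) (max (N 1 * N 2) (N 0 * N 2)) =
      max (J3 L d N (EuclideanSpace.single 0 1))
        (max (J3 L d N (EuclideanSpace.single 1 1)) (J3 L d N (EuclideanSpace.single 2 1))) :=
  J3_lt_max_of_not_axis_general L d N hd hN u hu hnot
end
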